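/- (Nonlinear Cauchy interlacing, positive type.) Assume the interval J = (a,b) is of positive type, T is continuously differentiable on (a,b), and let λ_i ∈ (a,b) denote the i-th eigenvalue of T(·) given by the variational principle (the minimum over i-dimensional subspaces of the maximum of ρ). Let 1 ≤ m ≤ n and let U be an n×m complex matrix with linearly independent columns, so that U*T(ν)U is an m×m Hermitian matrix for each ν ∈ [a,b]. Then for each j ∈ {1,…,m} there exists ν_j ∈ (a,b) such that zero is the j-th largest eigenvalue (counted with multiplicity) of U*T(ν_j)U, ν_j equals the minimum over all j-dimensional ℂ-subspaces W ⊆ ℂ^m of the maximum of ρ(Uy) over nonzero y ∈ W, and the interlacing inequalities λ_j ≤ ν_j ≤ λ_{n−m+j} hold. -/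

import Mathlib

/-!
Put `σ y = ρ (U y)`, a continuous function on `ℂ^m ∖ 0` that is invariant under scaling, and let
`ν` be the infimum, over `(j+1)`-dimensional subspaces `W ⊆ ℂ^m`, of `max_W σ` (maxima exist by
compactness of the unit sphere). Positive type says that `y* U* T(ν) U y` has the sign of
`ν - σ y`. Hence a subspace on which `U* T(ν) U` is positive definite lies in `{σ < ν}` and has
dimension at most `j`, while one on which it is negative definite lies in `{σ > ν}`, so it meets
trivially a `(j+1)`-dimensional `W` whose maximum is close to `ν`, and has dimension at most
`m - j - 1`. Counting eigenvalues of each sign, zero is the `j`-th largest one, and a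
`(j+1)`-dimensional subspace of the nonnegative eigenspace realises the infimum. Interlacing
follows because `U` maps `(j+1)`-dimensional subspaces of `ℂ^m` injectively into `ℂ^n`, and pulls
an `(n - m + j + 1)`-dimensional subspace of `ℂ^n` back to one of dimension at least `j + 1`.
-/

open Matrix Set
open scoped ComplexOrder Finset

/-- `0` is the `j`-th largest eigenvalue (counted with multiplicity, `j` zero-based)
of the matrix `A`: the eigenvalues of `A` can be listed in decreasing order with
multiplicity (as the roots of the characteristic polynomial) so that the `j`-th
entry is `0`. -/
def ZeroIsKthLargestEigenvalue {m : ℕ} (A : Matrix (Fin m) (Fin m) ℂ) (k : Fin m) : Prop :=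
  ∃ μ : Fin m → ℝ, Antitone μ ∧
    A.charpoly = ∏ i : Fin m, (Polynomial.X - Polynomial.C ((μ i : ℂ))) ∧ μ k = 0

namespace Submodule

variable {K V V' : Type*} [DivisionRing K] [AddCommGroup V] [Module K V] [AddCommGroup V']
  [Module K V']

theorem exists_le_finrank_eq (W : Submodule K V) [FiniteDimensional K W] {k : ℕ}
    (hk : k ≤ Module.finrank K W) : ∃ W' ≤ W, Module.finrank K W' = k := by
  let B := Module.finBasis K W
  have hli : LinearIndependent K fun i : Fin k => (B (Fin.castLE hk i) : V) :=
    (B.linearIndependent.comp _ (Fin.castLE_injective hk)).map' W.subtype W.ker_subtype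
  refine ⟨span K (Set.range fun i : Fin k => (B (Fin.castLE hk i) : V)), ?_, ?_⟩
  · rw [span_le]
    rintro _ ⟨i, rfl⟩
    exact (B _).2
  · rw [finrank_span_eq_card hli, Fintype.card_fin]

theorem exists_mem_inf_ne_zero [FiniteDimensional K V] {W N : Submodule K V}
    (h : Module.finrank K V < Module.finrank K W + Module.finrank K N) :
    ∃ x ∈ W, x ∈ N ∧ x ≠ 0 := by
  by_contra! hWN
  exact h.not_ge (finrank_add_finrank_le_of_disjoint (disjoint_def.mpr hWN))

theorem finrank_add_le_finrank_comap_add [FiniteDimensional K V'] {f : V →ₗ[K] V'}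
    (hf : Function.Injective f) (S : Submodule K V') :
    Module.finrank K S + Module.finrank K V ≤
      Module.finrank K (S.comap f) + Module.finrank K V' := by
  have : FiniteDimensional K V := Module.Finite.of_injective f hf
  have hmap : Module.finrank K ((S.comap f).map f) = Module.finrank K (S.comap f) :=
    (equivMapOfInjective f hf _).finrank_eq.symm
  rw [map_comap_eq] at hmap
  have := finrank_sup_add_finrank_inf_eq (LinearMap.range f) S
  rw [LinearMap.finrank_range_of_inj hf] at this
  have := (LinearMap.range f ⊔ S).finrank_le
  omega

end Submodule

/-- The maxima of `σ` over the nonzero vectors of `k`-dimensional subspaces; its least element is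
the min-max value `min_{dim W = k} max_{x ∈ W ∖ 0} σ x`. -/
def subspaceMaxima (𝕜 : Type*) {E : Type*} [DivisionRing 𝕜] [AddCommGroup E] [Module 𝕜 E]
    (σ : E → ℝ) (k : ℕ) : Set ℝ :=
  {r | ∃ W : Submodule 𝕜 E, Module.finrank 𝕜 W = k ∧ IsGreatest (σ '' {x | x ∈ W ∧ x ≠ 0}) r}

theorem subspaceMaxima_subset {𝕜 E : Type*} [DivisionRing 𝕜] [AddCommGroup E] [Module 𝕜 E]
    {σ : E → ℝ} {k : ℕ} : subspaceMaxima 𝕜 σ k ⊆ σ '' {x | x ≠ 0} := by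
  rintro _ ⟨W, -, ⟨x, ⟨-, hx⟩, rfl⟩, -⟩
  exact ⟨x, hx, rfl⟩

section MinMax

variable {𝕜 E : Type*} [RCLike 𝕜] [NormedAddCommGroup E] [NormedSpace 𝕜 E] [FiniteDimensional 𝕜 E]

theorem isCompact_image_submodule_of_smul_invariant {σ : E → ℝ}
    (hσ : ContinuousOn σ {x | x ≠ 0}) (hσ₀ : ∀ c : 𝕜, c ≠ 0 → ∀ x, σ (c • x) = σ x)
    (W : Submodule 𝕜 E) : IsCompact (σ '' {x | x ∈ W ∧ x ≠ 0}) := by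
  have : ProperSpace E := FiniteDimensional.proper_rclike 𝕜 E
  have hsphere : σ '' {x | x ∈ W ∧ x ≠ 0} = σ '' (W ∩ Metric.sphere 0 1) := by
    apply subset_antisymm
    · rintro _ ⟨x, ⟨hxW, hx⟩, rfl⟩
      have hx' : (‖x‖⁻¹ : 𝕜) ≠ 0 := by simpa using hx
      refine ⟨(‖x‖⁻¹ : 𝕜) • x, ⟨W.smul_mem _ hxW, ?_⟩, hσ₀ _ hx' x⟩
      simp [norm_smul, hx]
    · rintro _ ⟨x, ⟨hxW, hx⟩, rfl⟩
      exact ⟨x, ⟨hxW, ne_zero_of_mem_unit_sphere ⟨x, hx⟩⟩, rfl⟩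
  rw [hsphere]
  refine (isCompact_sphere 0 1 |>.inter_left (Submodule.closed_of_finiteDimensional W))
    |>.image_of_continuousOn (hσ.mono ?_)
  rintro x ⟨-, hx⟩
  exact ne_zero_of_mem_unit_sphere ⟨x, hx⟩

variable {σ : E → ℝ} {k : ℕ}

theorem bddBelow_subspaceMaxima
    (hσ : ContinuousOn σ {x | x ≠ 0}) (hσ₀ : ∀ c : 𝕜, c ≠ 0 → ∀ x, σ (c • x) = σ x) :
    BddBelow (subspaceMaxima 𝕜 σ k) := by
  refine (isCompact_image_submodule_of_smul_invariant hσ hσ₀ ⊤).bddBelow.mono ?_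
  simpa using subspaceMaxima_subset

theorem exists_isGreatest_image_submodule
    (hσ : ContinuousOn σ {x | x ≠ 0}) (hσ₀ : ∀ c : 𝕜, c ≠ 0 → ∀ x, σ (c • x) = σ x)
    {W : Submodule 𝕜 E} (hW : 0 < Module.finrank 𝕜 W) :
    ∃ x, (x ∈ W ∧ x ≠ 0) ∧ IsGreatest (σ '' {x | x ∈ W ∧ x ≠ 0}) (σ x) := by
  obtain ⟨x, hxW, hx⟩ := Submodule.exists_mem_ne_zero_of_ne_bot (Submodule.one_le_finrank_iff.mp hW)
  obtain ⟨_, ⟨y, hy, rfl⟩, hmax⟩ := (isCompact_image_submodule_of_smul_invariant hσ hσ₀ W)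
    |>.exists_isGreatest ⟨σ x, x, ⟨hxW, hx⟩, rfl⟩
  exact ⟨y, hy, ⟨y, hy, rfl⟩, hmax⟩

theorem exists_isLeast_image_submodule
    (hσ : ContinuousOn σ {x | x ≠ 0}) (hσ₀ : ∀ c : 𝕜, c ≠ 0 → ∀ x, σ (c • x) = σ x)
    {W : Submodule 𝕜 E} (hW : 0 < Module.finrank 𝕜 W) :
    ∃ x, (x ∈ W ∧ x ≠ 0) ∧ IsLeast (σ '' {x | x ∈ W ∧ x ≠ 0}) (σ x) := by
  obtain ⟨x, hxW, hx⟩ := Submodule.exists_mem_ne_zero_of_ne_bot (Submodule.one_le_finrank_iff.mp hW)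
  obtain ⟨_, ⟨y, hy, rfl⟩, hmin⟩ := (isCompact_image_submodule_of_smul_invariant hσ hσ₀ W)
    |>.exists_isLeast ⟨σ x, x, ⟨hxW, hx⟩, rfl⟩
  exact ⟨y, hy, ⟨y, hy, rfl⟩, hmin⟩

theorem exists_sInf_subspaceMaxima_le_of_le_finrank
    (hσ : ContinuousOn σ {x | x ≠ 0}) (hσ₀ : ∀ c : 𝕜, c ≠ 0 → ∀ x, σ (c • x) = σ x)
    (hk : 0 < k) {W : Submodule 𝕜 E} (hW : k ≤ Module.finrank 𝕜 W) :
    ∃ x ∈ W, x ≠ 0 ∧ sInf (subspaceMaxima 𝕜 σ k) ≤ σ x := by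
  obtain ⟨W', hW'W, hW'⟩ := W.exists_le_finrank_eq hW
  obtain ⟨x, ⟨hxW', hx⟩, hmax⟩ := exists_isGreatest_image_submodule hσ hσ₀ (hW' ▸ hk)
  exact ⟨x, hW'W hxW', hx, csInf_le (bddBelow_subspaceMaxima hσ hσ₀) ⟨W', hW', hmax⟩⟩

theorem exists_le_sInf_subspaceMaxima_of_finrank_lt
    (hσ : ContinuousOn σ {x | x ≠ 0}) (hσ₀ : ∀ c : 𝕜, c ≠ 0 → ∀ x, σ (c • x) = σ x)
    (hk : k ≤ Module.finrank 𝕜 E) {N : Submodule 𝕜 E}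
    (hN : Module.finrank 𝕜 E < k + Module.finrank 𝕜 N) :
    ∃ x ∈ N, x ≠ 0 ∧ σ x ≤ sInf (subspaceMaxima 𝕜 σ k) := by
  have hNk : 0 < k ∧ 0 < Module.finrank 𝕜 N := by
    have := N.finrank_le
    omega
  obtain ⟨x, ⟨hxN, hx⟩, hmin⟩ := exists_isLeast_image_submodule hσ hσ₀ hNk.2
  refine ⟨x, hxN, hx, le_csInf ?_ ?_⟩
  · obtain ⟨W, -, hW⟩ := (⊤ : Submodule 𝕜 E).exists_le_finrank_eq (k := k) (by rwa [finrank_top])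
    obtain ⟨y, -, hmax⟩ := exists_isGreatest_image_submodule hσ hσ₀ (hW ▸ hNk.1)
    exact ⟨σ y, W, hW, hmax⟩
  · rintro r ⟨W, hW, -, hmax⟩
    obtain ⟨y, hyW, hyN, hy⟩ := Submodule.exists_mem_inf_ne_zero (hW ▸ hN)
    exact (hmin.2 ⟨y, ⟨hyN, hy⟩, rfl⟩).trans (hmax ⟨y, ⟨hyW, hy⟩, rfl⟩)

theorem isLeast_sInf_subspaceMaxima_of_forall_le
    (hσ : ContinuousOn σ {x | x ≠ 0}) (hσ₀ : ∀ c : 𝕜, c ≠ 0 → ∀ x, σ (c • x) = σ x)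
    (hk : 0 < k) {W : Submodule 𝕜 E} (hW : Module.finrank 𝕜 W = k)
    (hWσ : ∀ x ∈ W, x ≠ 0 → σ x ≤ sInf (subspaceMaxima 𝕜 σ k)) :
    IsLeast (subspaceMaxima 𝕜 σ k) (sInf (subspaceMaxima 𝕜 σ k)) := by
  obtain ⟨x, hxW, hx, hle⟩ := exists_sInf_subspaceMaxima_le_of_le_finrank hσ hσ₀ hk hW.ge
  have hxσ : σ x = sInf (subspaceMaxima 𝕜 σ k) := (hWσ x hxW hx).antisymm hle
  refine ⟨⟨W, hW, ⟨x, ⟨hxW, hx⟩, hxσ⟩, ?_⟩, fun _ => csInf_le (bddBelow_subspaceMaxima hσ hσ₀)⟩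
  rintro _ ⟨y, ⟨hyW, hy⟩, rfl⟩
  exact hWσ y hyW hy

theorem sInf_subspaceMaxima_mem_Ioo
    (hσ : ContinuousOn σ {x | x ≠ 0}) (hσ₀ : ∀ c : 𝕜, c ≠ 0 → ∀ x, σ (c • x) = σ x)
    (hk₀ : 0 < k) (hk : k ≤ Module.finrank 𝕜 E) {a b : ℝ} (hσab : ∀ x, x ≠ 0 → σ x ∈ Ioo a b) :
    sInf (subspaceMaxima 𝕜 σ k) ∈ Ioo a b := by
  obtain ⟨x, -, hx, hxν⟩ :=
    exists_le_sInf_subspaceMaxima_of_finrank_lt hσ hσ₀ hk (N := ⊤) (by rw [finrank_top]; omega)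
  obtain ⟨y, -, hy, hνy⟩ :=
    exists_sInf_subspaceMaxima_le_of_le_finrank hσ hσ₀ hk₀ (W := ⊤) (by rwa [finrank_top])
  exact ⟨(hσab x hx).1.trans_le hxν, hνy.trans_lt (hσab y hy).2⟩

end MinMax

section Interlacing

variable {𝕜 E F : Type*} [RCLike 𝕜] [NormedAddCommGroup E] [NormedSpace 𝕜 E]
  [AddCommGroup F] [Module 𝕜 F] {u : E →ₗ[𝕜] F} {ρ : F → ℝ} {k : ℕ}

theorem subspaceMaxima_comp_subset (hu : Function.Injective u) :
    subspaceMaxima 𝕜 (ρ ∘ u) k ⊆ subspaceMaxima 𝕜 ρ k := by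
  rintro r ⟨W, hW, hr⟩
  refine ⟨W.map u, (Submodule.equivMapOfInjective u hu W).finrank_eq.symm.trans hW, ?_⟩
  convert hr using 2
  ext y
  simp only [mem_image, mem_ofPred_eq, Submodule.mem_map, Function.comp_apply]
  constructor
  · rintro ⟨_, ⟨⟨x, hxW, rfl⟩, hx⟩, rfl⟩
    exact ⟨x, ⟨hxW, fun h => hx (by simp [h])⟩, rfl⟩
  · rintro ⟨x, ⟨hxW, hx⟩, rfl⟩
    exact ⟨u x, ⟨⟨x, hxW, rfl⟩, (map_ne_zero_iff u hu).2 hx⟩, rfl⟩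

theorem sInf_subspaceMaxima_comp_le [FiniteDimensional 𝕜 E] [FiniteDimensional 𝕜 F]
    (hσ : ContinuousOn (ρ ∘ u) {x | x ≠ 0})
    (hσ₀ : ∀ c : 𝕜, c ≠ 0 → ∀ x, (ρ ∘ u) (c • x) = (ρ ∘ u) x)
    (hu : Function.Injective u) (hk : 0 < k) {l : ℕ}
    (hl : Module.finrank 𝕜 F + k ≤ Module.finrank 𝕜 E + l) {r : ℝ}
    (hr : r ∈ subspaceMaxima 𝕜 ρ l) : sInf (subspaceMaxima 𝕜 (ρ ∘ u) k) ≤ r := by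
  obtain ⟨S, hS, -, hmax⟩ := hr
  have := Submodule.finrank_add_le_finrank_comap_add hu S
  obtain ⟨x, hxS, hx, hle⟩ :=
    exists_sInf_subspaceMaxima_le_of_le_finrank hσ hσ₀ hk (W := S.comap u) (by omega)
  exact hle.trans (hmax ⟨u x, ⟨hxS, (map_ne_zero_iff u hu).2 hx⟩, rfl⟩)

end Interlacing

theorem Matrix.star_dotProduct_conjTranspose_mul_mul_mulVec {m n R : Type*} [Fintype m]
    [Fintype n] [CommSemiring R] [StarRing R] (U : Matrix n m R) (B : Matrix n n R) (y : m → R) :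
    star y ⬝ᵥ (Uᴴ * B * U) *ᵥ y = star (U *ᵥ y) ⬝ᵥ B *ᵥ (U *ᵥ y) := by
  rw [← mulVec_mulVec, ← mulVec_mulVec, dotProduct_mulVec, ← star_mulVec]

namespace Matrix.IsHermitian

variable {𝕜 n : Type*} [RCLike 𝕜] [Fintype n] [DecidableEq n] {A : Matrix n n 𝕜}

theorem re_star_dotProduct_mulVec_eigenvectorUnitary (hA : A.IsHermitian) (c : n → 𝕜) :
    RCLike.re (star (hA.eigenvectorUnitary *ᵥ c) ⬝ᵥ A *ᵥ (hA.eigenvectorUnitary *ᵥ c)) =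
      ∑ i, hA.eigenvalues i * ‖c i‖ ^ 2 := by
  have hdiag := hA.conjStarAlgAut_star_eigenvectorUnitary
  rw [Unitary.conjStarAlgAut_star_apply, star_eq_conjTranspose] at hdiag
  rw [← star_dotProduct_conjTranspose_mul_mul_mulVec, hdiag]
  simp only [dotProduct, mulVec_diagonal, Function.comp_apply, map_sum]
  refine Finset.sum_congr rfl fun i _ => ?_
  rw [mul_left_comm, Pi.star_apply, RCLike.star_def, RCLike.conj_mul, RCLike.re_ofReal_mul]
  norm_cast

theorem exists_submodule_re_eq_sum (hA : A.IsHermitian) (s : Finset n) :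
    ∃ W : Submodule 𝕜 (n → 𝕜), Module.finrank 𝕜 W = #s ∧ ∀ x ∈ W, x ≠ 0 →
      ∃ c : n → 𝕜, (∃ i ∈ s, c i ≠ 0) ∧
        RCLike.re (star x ⬝ᵥ A *ᵥ x) = ∑ i ∈ s, hA.eigenvalues i * ‖c i‖ ^ 2 := by
  set V : Matrix n n 𝕜 := ↑hA.eigenvectorUnitary with hVdef
  have hV : Function.Injective V.mulVecLin := fun x y hxy => by
    simpa [hVdef, mulVec_mulVec] using congrArg (star V *ᵥ ·) hxy
  refine ⟨(Pi.spanSubset 𝕜 (s : Set n)).map V.mulVecLin, ?_, ?_⟩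
  · rw [← (Submodule.equivMapOfInjective _ hV _).finrank_eq, Pi.dim_spanSubset, ncard_coe_finset]
  · rintro _ ⟨c, hc, rfl⟩ hx
    rw [SetLike.mem_coe, Pi.mem_spanSubset_iff] at hc
    refine ⟨c, ?_, ?_⟩
    · by_contra! hcs
      exact hx (by simp [show c = 0 from funext fun i => by by_cases hi : i ∈ s <;> simp_all])
    · exact (re_star_dotProduct_mulVec_eigenvectorUnitary hA c).trans
        (Finset.sum_subset (Finset.subset_univ s) fun i _ hi => by simp [hc i hi]).symm

theorem exists_finrank_eq_card_pos (hA : A.IsHermitian) :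
    ∃ W : Submodule 𝕜 (n → 𝕜), Module.finrank 𝕜 W = #{i | 0 < hA.eigenvalues i} ∧
      ∀ x ∈ W, x ≠ 0 → 0 < RCLike.re (star x ⬝ᵥ A *ᵥ x) := by
  obtain ⟨W, hW, hre⟩ := exists_submodule_re_eq_sum hA {i | 0 < hA.eigenvalues i}
  refine ⟨W, hW, fun x hx hx0 => ?_⟩
  obtain ⟨c, ⟨i, hi, hci⟩, hx⟩ := hre x hx hx0
  rw [hx]
  exact Finset.sum_pos' (fun k hk => mul_nonneg (Finset.mem_filter.1 hk).2.le (sq_nonneg _))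
    ⟨i, hi, mul_pos (Finset.mem_filter.1 hi).2 (pow_pos (norm_pos_iff.2 hci) 2)⟩

theorem exists_finrank_eq_card_neg (hA : A.IsHermitian) :
    ∃ W : Submodule 𝕜 (n → 𝕜), Module.finrank 𝕜 W = #{i | hA.eigenvalues i < 0} ∧
      ∀ x ∈ W, x ≠ 0 → RCLike.re (star x ⬝ᵥ A *ᵥ x) < 0 := by
  obtain ⟨W, hW, hre⟩ := exists_submodule_re_eq_sum hA {i | hA.eigenvalues i < 0}
  refine ⟨W, hW, fun x hx hx0 => ?_⟩
  obtain ⟨c, ⟨i, hi, hci⟩, hx⟩ := hre x hx hx0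
  rw [hx]
  exact Finset.sum_neg'
    (fun k hk => mul_nonpos_of_nonpos_of_nonneg (Finset.mem_filter.1 hk).2.le (sq_nonneg _))
    ⟨i, hi, mul_neg_of_neg_of_pos (Finset.mem_filter.1 hi).2 (pow_pos (norm_pos_iff.2 hci) 2)⟩

theorem exists_finrank_eq_card_nonneg (hA : A.IsHermitian) :
    ∃ W : Submodule 𝕜 (n → 𝕜), Module.finrank 𝕜 W = #{i | 0 ≤ hA.eigenvalues i} ∧
      ∀ x ∈ W, x ≠ 0 → 0 ≤ RCLike.re (star x ⬝ᵥ A *ᵥ x) := by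
  obtain ⟨W, hW, hre⟩ := exists_submodule_re_eq_sum hA {i | 0 ≤ hA.eigenvalues i}
  refine ⟨W, hW, fun x hx hx0 => ?_⟩
  obtain ⟨c, -, hx⟩ := hre x hx hx0
  rw [hx]
  exact Finset.sum_nonneg fun k hk => mul_nonneg (Finset.mem_filter.1 hk).2 (sq_nonneg _)

end Matrix.IsHermitian

theorem Antitone.eq_zero_of_card_pos_le_of_card_neg_lt {m : ℕ} {μ : Fin m → ℝ} (hμ : Antitone μ)
    {j : Fin m} (hpos : #{i | 0 < μ i} ≤ j) (hneg : #{i | μ i < 0} < m - j) : μ j = 0 := by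
  rcases lt_trichotomy (μ j) 0 with h | h | h
  · have hsub : Finset.Ici j ⊆ ({i | μ i < 0} : Finset (Fin m)) := fun i hi =>
      Finset.mem_filter.2 ⟨Finset.mem_univ i, (hμ (Finset.mem_Ici.1 hi)).trans_lt h⟩
    have := Finset.card_le_card hsub
    rw [Fin.card_Ici] at this
    omega
  · exact h
  · have hsub : Finset.Iic j ⊆ ({i | 0 < μ i} : Finset (Fin m)) := fun i hi =>
      Finset.mem_filter.2 ⟨Finset.mem_univ i, h.trans_le (hμ (Finset.mem_Iic.1 hi))⟩
    have := Finset.card_le_card hsub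
    rw [Fin.card_Iic] at this
    omega

theorem zeroIsKthLargestEigenvalue_of_card {m : ℕ} {A : Matrix (Fin m) (Fin m) ℂ} {g : Fin m → ℝ}
    (hA : A.charpoly = ∏ i, (Polynomial.X - Polynomial.C (g i : ℂ))) {j : Fin m}
    (hpos : #{i | 0 < g i} ≤ j) (hneg : #{i | g i < 0} < m - j) :
    ZeroIsKthLargestEigenvalue A j := by
  set τ := Tuple.sort (OrderDual.toDual ∘ g)
  have hτ : Antitone (g ∘ τ) := monotone_toDual_comp_iff.1 (Tuple.monotone_sort _)
  refine ⟨g ∘ τ, hτ, hA.trans (Equiv.prod_comp τ _).symm,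
    hτ.eq_zero_of_card_pos_le_of_card_neg_lt ?_ ?_⟩
  · rwa [Finset.card_equiv (t := {i | 0 < g i}) τ (by simp)]
  · rwa [Finset.card_equiv (t := {i | g i < 0}) τ (by simp)]

section EigenvalueCounts

variable {𝕜 n : Type*} [RCLike 𝕜] [Fintype n] [DecidableEq n] {σ : (n → 𝕜) → ℝ}
  {A : Matrix n n 𝕜} {k : ℕ}

theorem card_pos_eigenvalues_lt_of_sign_eq
    (hσ : ContinuousOn σ {x | x ≠ 0}) (hσ₀ : ∀ c : 𝕜, c ≠ 0 → ∀ x, σ (c • x) = σ x)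
    (hA : A.IsHermitian) (hk : 0 < k)
    (hsign : ∀ x, x ≠ 0 → SignType.sign (RCLike.re (star x ⬝ᵥ A *ᵥ x)) =
      SignType.sign (sInf (subspaceMaxima 𝕜 σ k) - σ x)) :
    #{i | 0 < hA.eigenvalues i} < k := by
  by_contra! h
  obtain ⟨P, hP, hPpos⟩ := hA.exists_finrank_eq_card_pos
  obtain ⟨x, hxP, hx, hle⟩ := exists_sInf_subspaceMaxima_le_of_le_finrank hσ hσ₀ hk (hP ▸ h)
  have := sign_eq_one_iff.1 ((hsign x hx).symm.trans (sign_pos (hPpos x hxP hx)))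
  linarith

theorem card_neg_eigenvalues_le_of_sign_eq
    (hσ : ContinuousOn σ {x | x ≠ 0}) (hσ₀ : ∀ c : 𝕜, c ≠ 0 → ∀ x, σ (c • x) = σ x)
    (hA : A.IsHermitian) (hk : k ≤ Fintype.card n)
    (hsign : ∀ x, x ≠ 0 → SignType.sign (RCLike.re (star x ⬝ᵥ A *ᵥ x)) =
      SignType.sign (sInf (subspaceMaxima 𝕜 σ k) - σ x)) :
    #{i | hA.eigenvalues i < 0} ≤ Fintype.card n - k := by
  by_contra! h
  obtain ⟨N, hN, hNneg⟩ := hA.exists_finrank_eq_card_neg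
  obtain ⟨x, hxN, hx, hle⟩ := exists_le_sInf_subspaceMaxima_of_finrank_lt hσ hσ₀ (k := k)
    (by rwa [Module.finrank_fintype_fun_eq_card]) (N := N)
    (by rw [Module.finrank_fintype_fun_eq_card, hN]; omega)
  have := sign_eq_neg_one_iff.1 ((hsign x hx).symm.trans (sign_neg (hNneg x hxN hx)))
  linarith

theorem isLeast_sInf_subspaceMaxima_of_sign_eq
    (hσ : ContinuousOn σ {x | x ≠ 0}) (hσ₀ : ∀ c : 𝕜, c ≠ 0 → ∀ x, σ (c • x) = σ x)
    (hA : A.IsHermitian) (hk₀ : 0 < k) (hk : k ≤ Fintype.card n)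
    (hsign : ∀ x, x ≠ 0 → SignType.sign (RCLike.re (star x ⬝ᵥ A *ᵥ x)) =
      SignType.sign (sInf (subspaceMaxima 𝕜 σ k) - σ x)) :
    IsLeast (subspaceMaxima 𝕜 σ k) (sInf (subspaceMaxima 𝕜 σ k)) := by
  obtain ⟨W, hW, hWnonneg⟩ := hA.exists_finrank_eq_card_nonneg
  have hneg := card_neg_eigenvalues_le_of_sign_eq hσ hσ₀ hA hk hsign
  have hcard := Finset.card_filter_add_card_filter_not (s := Finset.univ)
    fun i => 0 ≤ hA.eigenvalues i
  simp only [not_le, Finset.card_univ] at hcard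
  obtain ⟨W', hW'W, hW'⟩ := W.exists_le_finrank_eq (k := k) (by omega)
  refine isLeast_sInf_subspaceMaxima_of_forall_le hσ hσ₀ hk₀ hW' fun x hx hx0 => ?_
  have := sign_nonneg_iff.1 ((hsign x hx0).symm ▸ sign_nonneg_iff.2 (hWnonneg x (hW'W hx) hx0))
  linarith

end EigenvalueCounts

theorem zeroIsKthLargestEigenvalue_of_sign_eq {m : ℕ} {σ : (Fin m → ℂ) → ℝ}
    (hσ : ContinuousOn σ {x | x ≠ 0}) (hσ₀ : ∀ c : ℂ, c ≠ 0 → ∀ x, σ (c • x) = σ x)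
    {A : Matrix (Fin m) (Fin m) ℂ} (hA : A.IsHermitian) (j : Fin m)
    (hsign : ∀ x, x ≠ 0 → SignType.sign (RCLike.re (star x ⬝ᵥ A *ᵥ x)) =
      SignType.sign (sInf (subspaceMaxima ℂ σ (j + 1)) - σ x)) :
    ZeroIsKthLargestEigenvalue A j := by
  refine zeroIsKthLargestEigenvalue_of_card (g := hA.eigenvalues) hA.charpoly_eq ?_ ?_
  · have := card_pos_eigenvalues_lt_of_sign_eq hσ hσ₀ hA (Nat.succ_pos _) hsign
    omega
  · have := card_neg_eigenvalues_le_of_sign_eq hσ hσ₀ hA (by simp) hsign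
    rw [Fintype.card_fin] at this
    omega

section PositiveType

variable {𝕜 n : Type*} [RCLike 𝕜] [Fintype n] {T : ℝ → Matrix n n 𝕜} {ρ : (n → 𝕜) → ℝ} {a b : ℝ}

theorem sign_re_star_dotProduct_mulVec_eq_sign_sub
    (hρroot : ∀ x : n → 𝕜, x ≠ 0 → star x ⬝ᵥ (T (ρ x)) *ᵥ x = 0)
    (hpos : ∀ x : n → 𝕜, x ≠ 0 → ∀ μ ∈ Ioo a b, μ ≠ ρ x →
      0 < (μ - ρ x) * RCLike.re (star x ⬝ᵥ (T μ) *ᵥ x))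
    {x : n → 𝕜} (hx : x ≠ 0) {μ : ℝ} (hμ : μ ∈ Ioo a b) :
    SignType.sign (RCLike.re (star x ⬝ᵥ (T μ) *ᵥ x)) = SignType.sign (μ - ρ x) := by
  rcases eq_or_ne μ (ρ x) with rfl | hne
  · simp [hρroot x hx]
  · rcases mul_pos_iff.1 (hpos x hx μ hμ hne) with ⟨h₁, h₂⟩ | ⟨h₁, h₂⟩
    · rw [sign_pos h₁, sign_pos h₂]
    · rw [sign_neg h₁, sign_neg h₂]

theorem apply_smul_eq_of_unique_root
    (hρmem : ∀ x : n → 𝕜, x ≠ 0 → ρ x ∈ Ioo a b)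
    (hρroot : ∀ x : n → 𝕜, x ≠ 0 → star x ⬝ᵥ (T (ρ x)) *ᵥ x = 0)
    (hρuniq : ∀ x : n → 𝕜, x ≠ 0 → ∀ μ ∈ Ioo a b, star x ⬝ᵥ (T μ) *ᵥ x = 0 → μ = ρ x)
    {c : 𝕜} (hc : c ≠ 0) (x : n → 𝕜) : ρ (c • x) = ρ x := by
  rcases eq_or_ne x 0 with rfl | hx
  · rw [smul_zero]
  · refine (hρuniq (c • x) (smul_ne_zero hc hx) (ρ x) (hρmem x hx) ?_).symm
    rw [mulVec_smul, star_smul, smul_dotProduct, dotProduct_smul, hρroot x hx, smul_zero, smul_zero]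

end PositiveType

/-- nonlinear Cauchy interlacing theorem, positive type.  If `(a,b)` is
of positive type, `T` is continuously differentiable on `(a,b)`, `lam i` is the
`i`-th eigenvalue given by the variational principle (zero-based), and `U` is an
`n×m` matrix with linearly independent columns, then for each `j` (zero-based) the
projected problem `Uᴴ T(ν) U` has a `j`-th eigenvalue `ν j ∈ (a,b)` given by the
min-max principle for `y ↦ ρ(U y)`, and `lam j ≤ ν j ≤ lam (n-m+j)`. -/
theorem nonlinear_cauchy_interlacing_positive_type
    (n m : ℕ) (hmn : m ≤ n)
    (a b : ℝ)
    (T : ℝ → Matrix (Fin n) (Fin n) ℂ)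
    (hTherm : ∀ μ ∈ Set.Icc a b, (T μ).IsHermitian)
    (ρ : (Fin n → ℂ) → ℝ)
    (hρcont : ContinuousOn ρ {x : Fin n → ℂ | x ≠ 0})
    (hρmem : ∀ x : Fin n → ℂ, x ≠ 0 → ρ x ∈ Set.Ioo a b)
    (hρroot : ∀ x : Fin n → ℂ, x ≠ 0 → star x ⬝ᵥ (T (ρ x)) *ᵥ x = 0)
    (hρuniq : ∀ x : Fin n → ℂ, x ≠ 0 → ∀ μ ∈ Set.Ioo a b,
      star x ⬝ᵥ (T μ) *ᵥ x = 0 → μ = ρ x)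
    (hpos : ∀ x : Fin n → ℂ, x ≠ 0 → ∀ μ ∈ Set.Ioo a b, μ ≠ ρ x →
      0 < (μ - ρ x) * (star x ⬝ᵥ (T μ) *ᵥ x).re)
    (lam : Fin n → ℝ)
    (hlam : ∀ i : Fin n,
      IsLeast {r : ℝ | ∃ S : Submodule ℂ (Fin n → ℂ), Module.finrank ℂ S = (i : ℕ) + 1 ∧
        IsGreatest (ρ '' {x : Fin n → ℂ | x ∈ S ∧ x ≠ 0}) r} (lam i))
    (U : Matrix (Fin n) (Fin m) ℂ)
    (hU : LinearIndependent ℂ (fun j : Fin m => (fun i : Fin n => U i j))) :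
    ∀ j : Fin m, ∃ ν ∈ Set.Ioo a b,
      ZeroIsKthLargestEigenvalue (Uᴴ * T ν * U) j ∧
      IsLeast {r : ℝ | ∃ W : Submodule ℂ (Fin m → ℂ), Module.finrank ℂ W = (j : ℕ) + 1 ∧
        IsGreatest ((fun y => ρ (U *ᵥ y)) '' {y : Fin m → ℂ | y ∈ W ∧ y ≠ 0}) r} ν ∧
      lam ⟨(j : ℕ), lt_of_lt_of_le j.isLt hmn⟩ ≤ ν ∧
      ν ≤ lam ⟨n - m + (j : ℕ), by have := j.isLt; omega⟩ := by
  intro j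
  have hUinj : Function.Injective U.mulVecLin := mulVec_injective_iff.2 hU
  have hUne : ∀ y, y ≠ 0 → U.mulVecLin y ≠ 0 := fun y => (map_ne_zero_iff _ hUinj).2
  set σ := ρ ∘ U.mulVecLin
  have hσ : ContinuousOn σ {y | y ≠ 0} :=
    hρcont.comp U.mulVecLin.continuous_of_finiteDimensional.continuousOn hUne
  have hσ₀ : ∀ c : ℂ, c ≠ 0 → ∀ y, σ (c • y) = σ y := fun c hc y => by
    simp only [σ, Function.comp_apply, map_smul,
      apply_smul_eq_of_unique_root hρmem hρroot hρuniq hc]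
  set ν := sInf (subspaceMaxima ℂ σ (j + 1))
  have hν : ν ∈ Ioo a b :=
    sInf_subspaceMaxima_mem_Ioo hσ hσ₀ (Nat.succ_pos _) (by simp) fun y hy => hρmem _ (hUne y hy)
  have hA : (Uᴴ * T ν * U).IsHermitian :=
    isHermitian_conjTranspose_mul_mul U (hTherm ν (Ioo_subset_Icc_self hν))
  have hsign : ∀ y, y ≠ 0 → SignType.sign (RCLike.re (star y ⬝ᵥ (Uᴴ * T ν * U) *ᵥ y)) =
      SignType.sign (ν - σ y) := fun y hy => by
    rw [star_dotProduct_conjTranspose_mul_mul_mulVec]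
    exact sign_re_star_dotProduct_mulVec_eq_sign_sub hρroot hpos (hUne y hy) hν
  have hleast := isLeast_sInf_subspaceMaxima_of_sign_eq hσ hσ₀ hA (Nat.succ_pos _) (by simp) hsign
  refine ⟨ν, hν, zeroIsKthLargestEigenvalue_of_sign_eq hσ hσ₀ hA j hsign, hleast, ?_, ?_⟩
  · exact (hlam _).2 (subspaceMaxima_comp_subset hUinj hleast.1)
  · refine sInf_subspaceMaxima_comp_le hσ hσ₀ hUinj (Nat.succ_pos _) ?_ (hlam ⟨n - m + j, _⟩).1
    simp only [Module.finrank_fin_fun]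
    omega
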